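/- In the two-point N-model M of the incompleteness construction for NA_{0,n} (n ≥ 2), for every formula ψ: a R_{□^{n-1}ψ} b if and only if a ⊮ ψ. -/

import Mathlib

inductive Formula : Type
  | bot : Formula
  | var : ℕ → Formula
  | neg : Formula → Formula
  | or : Formula → Formula → Formula
  | box : Formula → Formula
  deriving DecidableEq

namespace Formula

def imp (φ ψ : Formula) : Formula := .or (.neg φ) ψ

def and (φ ψ : Formula) : Formula := .neg (.or (.neg φ) (.neg ψ))

/-- □^n φ -/
def boxn : ℕ → Formula → Formula
  | 0, φ => φ
  | k+1, φ => .box (boxn k φ)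

/-- the set of subformulas -/
def sub : Formula → Finset Formula
  | .bot => {.bot}
  | .var p => {.var p}
  | .neg φ => insert (.neg φ) φ.sub
  | .or φ ψ => insert (.or φ ψ) (φ.sub ∪ ψ.sub)
  | .box φ => insert (.box φ) φ.sub

/-- ∼ρ -/
def negg : Formula → Formula
  | .neg φ => φ
  | φ => .neg φ

end Formula

def NSub (ψ : Formula) : Finset Formula := ψ.sub ∪ ψ.sub.image Formula.negg

/-- boolean evaluation treating boxed formulas and variables as atoms -/
def evalP (v : Formula → Bool) : Formula → Bool
  | .bot => false
  | .var p => v (.var p)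
  | .neg φ => !(evalP v φ)
  | .or φ ψ => evalP v φ || evalP v ψ
  | .box φ => v (.box φ)

/-- propositional tautologies in the modal language -/
def Tautology (φ : Formula) : Prop := ∀ v, evalP v φ = true

/-- Provability in NA_{m,n} (ros = false) and NRA_{m,n} (ros = true):
    propositional tautologies, the scheme □^n φ → □^m φ, modus ponens,
    necessitation, and (if ros) the rule Ros^□ : ¬□φ / ¬□□φ. -/
inductive Prov (m n : ℕ) (ros : Bool) : Formula → Prop
  | taut {φ} : Tautology φ → Prov m n ros φ
  | axA (φ) : Prov m n ros ((Formula.boxn n φ).imp (Formula.boxn m φ))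
  | mp {φ ψ} : Prov m n ros (φ.imp ψ) → Prov m n ros φ → Prov m n ros ψ
  | nec {φ} : Prov m n ros φ → Prov m n ros (.box φ)
  | ros {φ} : ros = true → Prov m n ros (.neg (.box φ)) →
      Prov m n ros (.neg (.box (.box φ)))

/-- An N-frame on world set W: a binary relation R_φ for each formula φ. -/
abbrev NFrame (W : Type) := Formula → W → W → Prop

structure NModel (W : Type) where
  Rel : NFrame W
  V : W → ℕ → Prop

/-- satisfaction in an N-model -/
def Sat {W : Type} (M : NModel W) : W → Formula → Prop
  | _, .bot => False
  | w, .var p => M.V w p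
  | w, .neg φ => ¬ Sat M w φ
  | w, .or φ ψ => Sat M w φ ∨ Sat M w ψ
  | w, .box φ => ∀ w', M.Rel φ w w' → Sat M w' φ

/-- x R_φ^k y : there is a φ-path of length k from x to y -/
def FPath {W : Type} (R : NFrame W) (φ : Formula) : ℕ → W → W → Prop
  | 0, x, y => x = y
  | k+1, x, y => ∃ w, R (Formula.boxn k φ) x w ∧ FPath R φ k w y

/-- (m,n)-accessibility for φ -/
def AccFor {W : Type} (R : NFrame W) (m n : ℕ) (φ : Formula) : Prop :=
  ∀ x y, FPath R φ m x y → FPath R φ n x y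

/-- Γ-(m,n)-accessibility -/
def SubAcc {W : Type} (R : NFrame W) (m n : ℕ) (Γ : Finset Formula) : Prop :=
  ∀ φ, Formula.boxn m φ ∈ Γ → AccFor R m n φ

/-- (m,n)-accessibility -/
def Accessible {W : Type} (R : NFrame W) (m n : ℕ) : Prop :=
  ∀ φ, AccFor R m n φ

def ValidM {W : Type} (M : NModel W) (ψ : Formula) : Prop := ∀ w, Sat M w ψ

def ValidF {W : Type} (R : NFrame W) (ψ : Formula) : Prop :=
  ∀ V : W → ℕ → Prop, ValidM ⟨R, V⟩ ψ

def Formula.size : Formula → ℕ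
  | .bot => 1
  | .var _ => 1
  | .neg φ => φ.size + 1
  | .or φ ψ => φ.size + ψ.size + 1
  | .box φ => φ.size + 1

/-- strip k boxes from the front of a formula, if possible -/
def strip : ℕ → Formula → Option Formula
  | 0, φ => some φ
  | k+1, .box φ => strip k φ
  | _+1, _ => none

theorem strip_size : ∀ {k : ℕ} {φ χ : Formula}, strip k φ = some χ → χ.size ≤ φ.size := by
  intro k
  induction k with
  | zero => intro φ χ h; simp [strip] at h; simp [h]
  | succ k ih =>
    intro φ χ h
    cases φ <;> simp [strip] at h
    exact le_trans (ih h) (by simp [Formula.size])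

/-- a R_{□^{n-1}ψ} b, as a function of ψ (here n1 = n - 1) -/
def dRec (n1 : ℕ) : Formula → Bool
  | .bot => true
  | .var _ => false
  | .neg φ => !(dRec n1 φ)
  | .or φ χ => dRec n1 φ && dRec n1 χ
  | .box φ =>
    match h : strip n1 φ with
    | some χ => dRec n1 χ
    | none => false
termination_by φ => φ.size
decreasing_by
  · simp [Formula.size]
  · simp [Formula.size]
  · simp [Formula.size]
  · have := strip_size h; simp [Formula.size]; omega

/-- whether a R_φ b -/
def aRb (n1 : ℕ) (φ : Formula) : Bool :=
  match strip n1 φ with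
  | some χ => dRec n1 χ
  | none => false

/-- the two-point model on Bool, with a = false and b = true -/
def Rel8 (n : ℕ) : NFrame Bool :=
  fun φ x y =>
    if x = true then True else if y = true then aRb (n-1) φ = true else False

def M8 (n : ℕ) : NModel Bool := ⟨Rel8 n, fun _ _ => True⟩


/-! Induction along the recursion defining `dRec`. The only nontrivial case is `□φ` with
`φ = □^{n-1}χ`: `a ⊮ □φ` iff `a R_φ b` and `b ⊮ φ`. Since `b` sees every world,
`b ⊩ □^{n-1}χ` with `n - 1 ≥ 1` would give `a ⊩ χ`, so by the induction hypothesis on `χ`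
the second condition follows from the first. -/

theorem strip_boxn (k : ℕ) (χ : Formula) : strip k (Formula.boxn k χ) = some χ := by
  induction k with
  | zero => rfl
  | succ k ih => exact ih

theorem eq_boxn_of_strip_eq_some {k : ℕ} {φ χ : Formula} (h : strip k φ = some χ) :
    φ = Formula.boxn k χ := by
  induction k generalizing φ with
  | zero => simpa [strip, Formula.boxn, eq_comm] using h
  | succ k ih =>
    cases φ <;> simp only [strip, reduceCtorEq] at h
    exact congrArg Formula.box (ih h)

theorem dRec_box (n1 : ℕ) (φ : Formula) : dRec n1 (.box φ) = aRb n1 φ := by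
  rw [dRec, aRb]
  split <;> simp_all

theorem aRb_eq_dRec_of_strip_eq_some {n1 : ℕ} {φ χ : Formula} (h : strip n1 φ = some χ) :
    aRb n1 φ = dRec n1 χ := by
  simp only [aRb, h]

theorem rel8_false_true_iff (n : ℕ) (φ : Formula) :
    Rel8 n φ false true ↔ aRb (n - 1) φ = true := by
  simp [Rel8]

theorem sat_true_box_iff (n : ℕ) (φ : Formula) :
    Sat (M8 n) true (.box φ) ↔ ∀ w, Sat (M8 n) w φ := by
  simp [Sat, M8, Rel8]

theorem sat_false_box_iff (n : ℕ) (φ : Formula) :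
    Sat (M8 n) false (.box φ) ↔ (aRb (n - 1) φ = true → Sat (M8 n) true φ) := by
  simp [Sat, M8, Rel8]

theorem sat_of_sat_true_boxn_succ {n : ℕ} (k : ℕ) {χ : Formula}
    (h : Sat (M8 n) true (Formula.boxn (k + 1) χ)) (w : Bool) : Sat (M8 n) w χ := by
  induction k with
  | zero => exact (sat_true_box_iff n χ).1 h w
  | succ k ih => exact ih ((sat_true_box_iff n _).1 h true)

theorem dRec_iff_not_sat_false {n : ℕ} (hn : 2 ≤ n) (ψ : Formula) :
    dRec (n - 1) ψ = true ↔ ¬ Sat (M8 n) false ψ := by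
  induction ψ using dRec.induct (n1 := n - 1) with
  | case1 => simp [dRec, Sat]
  | case2 p => simp [dRec, Sat, M8]
  | case3 φ ih => simp [dRec, Sat, ← ih]
  | case4 φ χ ihφ ihχ => simp [dRec, Sat, ← ihφ, ← ihχ, not_or]
  | case5 φ χ hstrip ih =>
    rw [dRec_box, sat_false_box_iff, aRb_eq_dRec_of_strip_eq_some hstrip,
      eq_boxn_of_strip_eq_some hstrip]
    obtain ⟨k, hk⟩ : ∃ k, n - 1 = k + 1 := ⟨n - 2, by omega⟩
    have not_sat_b : dRec (n - 1) χ = true → ¬ Sat (M8 n) true (Formula.boxn (n - 1) χ) :=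
      fun hd hsat => ih.1 hd (sat_of_sat_true_boxn_succ k (hk ▸ hsat) false)
    tauto
  | case6 φ hstrip =>
    rw [dRec_box, sat_false_box_iff]
    simp [aRb, hstrip]

theorem stmt8 (n : ℕ) (hn : 2 ≤ n) (ψ : Formula) :
    Rel8 n (Formula.boxn (n - 1) ψ) false true ↔ ¬ Sat (M8 n) false ψ := by
  rw [rel8_false_true_iff, aRb_eq_dRec_of_strip_eq_some (strip_boxn _ _)]
  exact dRec_iff_not_sat_false hn ψ
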